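/- Let n ≥ 1, let 𝒴 ⊆ ℝⁿ be a nonempty open set, let m ≥ 0, C ≥ 0 and ε > 0. Suppose F : ℝⁿ × ℝ × ℝⁿ → ℝ satisfies |F(y₁, q₁, p) − F(y₂, q₂, p)| ≤ C·‖p‖·(|q₁ − q₂| + ‖y₁ − y₂‖) for all y₁, y₂, q₁, q₂, p. Let u : 𝒴̄ → ℝ be Lipschitz continuous with constant m and a viscosity solution of F(y, u, Du) = 0 on 𝒴, and let u^ε be its sup-convolution. Define 𝒴_ε := { y ∈ 𝒴 : ‖y − w‖ > 2·m·ε for all w ∈ ∂𝒴 }. Then there exists a constant c̄ < ∞ depending only on C and m such that u^ε satisfies F(y, u^ε, Du^ε) ≤ c̄·ε in the viscosity sense on 𝒴_ε: for every twice continuously differentiable φ : ℝⁿ → ℝ, whenever u^ε − φ attains a local maximum at a point y ∈ 𝒴_ε, one has F(y, u^ε(y), ∇φ(y)) ≤ c̄·ε. -/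

import Mathlib

/-!
The supremum defining `u^ε(y)` is attained at some `ŷ` with `‖ŷ - y‖ ≤ 2 m ε`, so `ŷ ∈ 𝒴` when
`y ∈ 𝒴_ε`. If `φ` touches `u^ε` from above at `y`, then `p ↦ φ p + ‖ŷ - p‖² / (2ε)` has a local
minimum at `y`, whence `∇φ(y) = (ŷ - y) / ε`, and the translate `φ(· + y - ŷ)` touches `u` from
above at `ŷ`, whence `F(ŷ, u(ŷ), ∇φ(y)) ≤ 0`. The structure condition on `F` moves this to
`(y, u^ε(y))` at a cost `C ‖∇φ(y)‖ (‖ŷ - y‖² / (2ε) + ‖ŷ - y‖) ≤ 4 C (m³ + m²) ε`.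
-/

/-- `u` is a viscosity subsolution of `F (y, u y, Du y) = 0` on an open set `U ⊆ ℝⁿ`. -/
def IsViscositySubsolnOnE (n : ℕ)
    (F : EuclideanSpace ℝ (Fin n) → ℝ → EuclideanSpace ℝ (Fin n) → ℝ)
    (u : EuclideanSpace ℝ (Fin n) → ℝ) (U : Set (EuclideanSpace ℝ (Fin n))) : Prop :=
  ContinuousOn u U ∧
    ∀ φ : EuclideanSpace ℝ (Fin n) → ℝ, ContDiff ℝ 2 φ → ∀ y ∈ U,
      IsLocalMax (fun p => u p - φ p) y → F y (u y) (gradient φ y) ≤ 0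

/-- `u` is a viscosity supersolution of `F (y, u y, Du y) = 0` on an open set `U ⊆ ℝⁿ`. -/
def IsViscositySupersolnOnE (n : ℕ)
    (F : EuclideanSpace ℝ (Fin n) → ℝ → EuclideanSpace ℝ (Fin n) → ℝ)
    (u : EuclideanSpace ℝ (Fin n) → ℝ) (U : Set (EuclideanSpace ℝ (Fin n))) : Prop :=
  ContinuousOn u U ∧
    ∀ φ : EuclideanSpace ℝ (Fin n) → ℝ, ContDiff ℝ 2 φ → ∀ y ∈ U,
      IsLocalMin (fun p => u p - φ p) y → 0 ≤ F y (u y) (gradient φ y)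

/-- `u` is a viscosity solution of `F (y, u y, Du y) = 0` on an open set `U ⊆ ℝⁿ`. -/
def IsViscositySolnOnE (n : ℕ)
    (F : EuclideanSpace ℝ (Fin n) → ℝ → EuclideanSpace ℝ (Fin n) → ℝ)
    (u : EuclideanSpace ℝ (Fin n) → ℝ) (U : Set (EuclideanSpace ℝ (Fin n))) : Prop :=
  IsViscositySubsolnOnE n F u U ∧ IsViscositySupersolnOnE n F u U

open Set Filter Topology NNReal InnerProductSpace

section SupConvolution

variable {E : Type*} [NormedAddCommGroup E]

noncomputable def supConv (K : Set E) (u : E → ℝ) (ε : ℝ) (p : E) : ℝ :=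
  ⨆ w : K, (u w - ‖(w : E) - p‖ ^ 2 / (2 * ε))

lemma mul_sub_sq_div_le {ε : ℝ} (hε : 0 < ε) (m t : ℝ) :
    m * t - t ^ 2 / (2 * ε) ≤ m ^ 2 * ε / 2 := by
  have : m * t - m ^ 2 * ε / 2 ≤ t ^ 2 / (2 * ε) := by
    rw [le_div_iff₀ (by positivity)]
    nlinarith [sq_nonneg (t - m * ε)]
  linarith

lemma mul_le_sq_div_of_le {ε m t : ℝ} (hε : 0 < ε) (hm : 0 ≤ m) (ht : 2 * m * ε ≤ t) :
    m * t ≤ t ^ 2 / (2 * ε) := by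
  rw [le_div_iff₀ (by positivity)]
  nlinarith [mul_nonneg hm hε.le]

variable {K : Set E} {u : E → ℝ} {M : ℝ≥0} {ε : ℝ}

lemma LipschitzOnWith.sub_le_mul_norm_sub {x y : E} (hu : LipschitzOnWith M u K) (hx : x ∈ K)
    (hy : y ∈ K) : u x - u y ≤ M * ‖x - y‖ := by
  simpa [Real.dist_eq, dist_eq_norm] using (le_abs_self _).trans (hu.dist_le_mul x hx y hy)

lemma bddAbove_supConv (hu : LipschitzOnWith M u K) (hε : 0 < ε) {y : E} (hy : y ∈ K) (p : E) :
    BddAbove (range fun w : K => u w - ‖(w : E) - p‖ ^ 2 / (2 * ε)) := by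
  refine ⟨u y + M * ‖p - y‖ + M ^ 2 * ε / 2, ?_⟩
  rintro _ ⟨⟨w, hw⟩, rfl⟩
  have hlip := hu.sub_le_mul_norm_sub hw hy
  have htri : ‖w - y‖ ≤ ‖w - p‖ + ‖p - y‖ := norm_sub_le_norm_sub_add_norm_sub w p y
  have := mul_sub_sq_div_le hε M ‖w - p‖
  nlinarith [mul_le_mul_of_nonneg_left htri M.coe_nonneg]

lemma le_supConv (hu : LipschitzOnWith M u K) (hε : 0 < ε) {w : E} (hw : w ∈ K) (p : E) :
    u w - ‖w - p‖ ^ 2 / (2 * ε) ≤ supConv K u ε p :=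
  le_ciSup (f := fun w : K => u w - ‖(w : E) - p‖ ^ 2 / (2 * ε))
    (bddAbove_supConv hu hε hw p) ⟨w, hw⟩

lemma sub_sq_div_le_of_lt_norm_sub (hu : LipschitzOnWith M u K) (hε : 0 < ε) {w y : E}
    (hw : w ∈ K) (hy : y ∈ K) (hfar : 2 * M * ε < ‖w - y‖) :
    u w - ‖w - y‖ ^ 2 / (2 * ε) ≤ u y := by
  have := mul_le_sq_div_of_le hε M.coe_nonneg hfar.le
  linarith [hu.sub_le_mul_norm_sub hw hy]

-- Points farther than `2 M ε` from `y` lose to `y` itself, so the supremum is attained on a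
-- compact set.
lemma exists_supConv_eq [ProperSpace E] (hK : IsClosed K) (hu : LipschitzOnWith M u K)
    (hε : 0 < ε) {y : E} (hy : y ∈ K) :
    ∃ ŷ ∈ K, ‖ŷ - y‖ ≤ 2 * M * ε ∧ supConv K u ε y = u ŷ - ‖ŷ - y‖ ^ 2 / (2 * ε) := by
  set S := K ∩ Metric.closedBall y (2 * M * ε)
  have hS : IsCompact S :=
    (isCompact_closedBall y _).of_isClosed_subset (hK.inter Metric.isClosed_closedBall)
      inter_subset_right
  have hyS : y ∈ S := ⟨hy, Metric.mem_closedBall_self (by positivity)⟩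
  have hcont : ContinuousOn (fun w => u w - ‖w - y‖ ^ 2 / (2 * ε)) S :=
    (hu.continuousOn.mono inter_subset_left).sub (by fun_prop)
  obtain ⟨ŷ, ⟨hŷK, hŷy⟩, hmax⟩ := hS.exists_isMaxOn ⟨y, hyS⟩ hcont
  rw [Metric.mem_closedBall, dist_eq_norm] at hŷy
  have : Nonempty K := ⟨⟨y, hy⟩⟩
  refine ⟨ŷ, hŷK, hŷy, le_antisymm (ciSup_le fun ⟨w, hw⟩ => ?_) (le_supConv hu hε hŷK y)⟩
  by_cases hwy : ‖w - y‖ ≤ 2 * M * ε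
  · exact hmax ⟨hw, by rwa [Metric.mem_closedBall, dist_eq_norm]⟩
  · have hyy : u y ≤ u ŷ - ‖ŷ - y‖ ^ 2 / (2 * ε) := by simpa using hmax hyS
    exact (sub_sq_div_le_of_lt_norm_sub hu hε hw hy (not_le.1 hwy)).trans hyy

variable {φ : E → ℝ} {y ŷ : E}

lemma isLocalMin_add_of_isLocalMax_supConv_sub (hu : LipschitzOnWith M u K) (hε : 0 < ε)
    (hŷ : ŷ ∈ K) (hval : supConv K u ε y = u ŷ - ‖ŷ - y‖ ^ 2 / (2 * ε))
    (hmax : IsLocalMax (fun p => supConv K u ε p - φ p) y) :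
    IsLocalMin (fun p => φ p + ‖ŷ - p‖ ^ 2 / (2 * ε)) y := by
  filter_upwards [hmax] with p hp
  have := le_supConv hu hε hŷ p
  simp only [hval] at hp ⊢
  linarith

lemma isLocalMax_sub_comp_add_of_isLocalMax_supConv_sub (hu : LipschitzOnWith M u K)
    (hε : 0 < ε) (hK : K ∈ 𝓝 ŷ) (hval : supConv K u ε y = u ŷ - ‖ŷ - y‖ ^ 2 / (2 * ε))
    (hmax : IsLocalMax (fun p => supConv K u ε p - φ p) y) :
    IsLocalMax (fun w => u w - φ (w + (y - ŷ))) ŷ := by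
  have hshift : Tendsto (fun w => w + (y - ŷ)) (𝓝 ŷ) (𝓝 y) := by
    simpa using (continuous_add_const (y - ŷ)).tendsto ŷ
  filter_upwards [hshift.eventually hmax, hK] with w hw hwK
  have := le_supConv hu hε hwK (w + (y - ŷ))
  simp only [hval, add_sub_cancel, show w - (w + (y - ŷ)) = ŷ - y by abel] at hw this ⊢
  linarith

end SupConvolution

section Gradient

variable {E : Type*} [NormedAddCommGroup E] [InnerProductSpace ℝ E] [CompleteSpace E]

lemma hasGradientAt_norm_sub_sq_div (a x : E) (ε : ℝ) :
    HasGradientAt (fun p => ‖a - p‖ ^ 2 / (2 * ε)) (ε⁻¹ • (x - a)) x := by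
  rw [hasGradientAt_iff_hasFDerivAt]
  simp only [div_eq_mul_inv]
  refine (((hasFDerivAt_id (𝕜 := ℝ) x).const_sub a).norm_sq.mul_const (2 * ε)⁻¹).congr_fderiv ?_
  ext v
  simp
  ring

lemma gradient_comp_add_right (φ : E → ℝ) (a x : E) :
    gradient (fun w => φ (w + a)) x = gradient φ (x + a) := by
  simp only [gradient, fderiv_comp_add_right]

lemma gradient_eq_of_isLocalMin_add_norm_sub_sq_div {φ : E → ℝ} {a x : E} {ε : ℝ}
    (hφ : DifferentiableAt ℝ φ x) (hmin : IsLocalMin (fun p => φ p + ‖a - p‖ ^ 2 / (2 * ε)) x) :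
    gradient φ x = ε⁻¹ • (a - x) := by
  have h := hmin.hasFDerivAt_eq_zero
    (hφ.hasGradientAt.hasFDerivAt.add (hasGradientAt_norm_sub_sq_div a x ε).hasFDerivAt)
  rw [← map_add, map_eq_zero_iff _ (toDual ℝ E).injective] at h
  rw [eq_neg_of_add_eq_zero_left h, ← smul_neg, neg_sub]

end Gradient

lemma apply_sub_sq_div_le_of_apply_le_zero {E : Type*} [NormedAddCommGroup E] [NormedSpace ℝ E]
    {F : E → ℝ → E → ℝ} {C m ε : ℝ}
    (hF : ∀ y₁ y₂ q₁ q₂ p, |F y₁ q₁ p - F y₂ q₂ p| ≤ C * ‖p‖ * (|q₁ - q₂| + ‖y₁ - y₂‖))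
    (hC : 0 ≤ C) (hε : 0 < ε) {y ŷ : E} {q : ℝ} (hsub : F ŷ q (ε⁻¹ • (ŷ - y)) ≤ 0)
    (hŷ : ‖ŷ - y‖ ≤ 2 * m * ε) :
    F y (q - ‖ŷ - y‖ ^ 2 / (2 * ε)) (ε⁻¹ • (ŷ - y)) ≤ (4 * C * m ^ 3 + 4 * C * m ^ 2) * ε := by
  have hm : 0 ≤ m := by nlinarith [norm_nonneg (ŷ - y)]
  have hP : ‖ε⁻¹ • (ŷ - y)‖ ≤ 2 * m := by
    rw [norm_smul, norm_inv, Real.norm_of_nonneg hε.le, inv_mul_le_iff₀ hε]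
    linarith
  have hd : ‖ŷ - y‖ ^ 2 / (2 * ε) ≤ 2 * m ^ 2 * ε := by
    rw [div_le_iff₀ (by positivity)]
    nlinarith [norm_nonneg (ŷ - y)]
  have hF' := (le_abs_self _).trans (hF y ŷ (q - ‖ŷ - y‖ ^ 2 / (2 * ε)) q (ε⁻¹ • (ŷ - y)))
  rw [sub_sub_cancel_left, abs_neg, abs_of_nonneg (by positivity), norm_sub_rev y] at hF'
  calc F y (q - ‖ŷ - y‖ ^ 2 / (2 * ε)) (ε⁻¹ • (ŷ - y))
      ≤ F ŷ q (ε⁻¹ • (ŷ - y))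
        + C * ‖ε⁻¹ • (ŷ - y)‖ * (‖ŷ - y‖ ^ 2 / (2 * ε) + ‖ŷ - y‖) := by linarith
    _ ≤ 0 + C * (2 * m) * (2 * m ^ 2 * ε + 2 * m * ε) := by gcongr
    _ = (4 * C * m ^ 3 + 4 * C * m ^ 2) * ε := by ring

theorem stmt_15_general (n : ℕ) (C m : ℝ) (hC : 0 ≤ C) (hm : 0 ≤ m) :
    ∃ cbar : ℝ,
      ∀ Y : Set (EuclideanSpace ℝ (Fin n)), IsOpen Y → Y.Nonempty →
      ∀ ε : ℝ, 0 < ε →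
      ∀ F : EuclideanSpace ℝ (Fin n) → ℝ → EuclideanSpace ℝ (Fin n) → ℝ,
        (∀ y₁ y₂ q₁ q₂ p, |F y₁ q₁ p - F y₂ q₂ p| ≤ C * ‖p‖ * (|q₁ - q₂| + ‖y₁ - y₂‖)) →
      ∀ u : EuclideanSpace ℝ (Fin n) → ℝ,
        (∀ y₁ ∈ closure Y, ∀ y₂ ∈ closure Y, |u y₁ - u y₂| ≤ m * ‖y₁ - y₂‖) →
        IsViscositySolnOnE n F u Y →
        ∀ φ : EuclideanSpace ℝ (Fin n) → ℝ, ContDiff ℝ 2 φ →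
          ∀ y : EuclideanSpace ℝ (Fin n),
            y ∈ Y → (∀ w ∈ frontier Y, 2 * m * ε < ‖y - w‖) →
            IsLocalMax (fun p =>
              (⨆ w : closure Y,
                (u ↑w - ‖(w : EuclideanSpace ℝ (Fin n)) - p‖ ^ 2 / (2 * ε))) - φ p) y →
            F y (⨆ w : closure Y,
                (u ↑w - ‖(w : EuclideanSpace ℝ (Fin n)) - y‖ ^ 2 / (2 * ε)))
              (gradient φ y) ≤ cbar * ε := by
  refine ⟨4 * C * m ^ 3 + 4 * C * m ^ 2, ?_⟩
  intro Y hY _ ε hε F hF u hu hsol φ hφ y hyY hyε hmax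
  change IsLocalMax (fun p => supConv (closure Y) u ε p - φ p) y at hmax
  change F y (supConv (closure Y) u ε y) (gradient φ y) ≤ _
  have hLip : LipschitzOnWith ⟨m, hm⟩ u (closure Y) :=
    LipschitzOnWith.of_dist_le_mul fun a ha b hb => by
      rw [Real.dist_eq, dist_eq_norm]
      exact hu a ha b hb
  obtain ⟨ŷ, hŷK, hŷy, hval⟩ := exists_supConv_eq isClosed_closure hLip hε (subset_closure hyY)
  have hŷY : ŷ ∈ Y := by
    by_contra hŷY
    have := hyε ŷ (hY.frontier_eq ▸ ⟨hŷK, hŷY⟩)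
    rw [norm_sub_rev] at this
    exact lt_irrefl _ (this.trans_le hŷy)
  have hgrad : gradient φ y = ε⁻¹ • (ŷ - y) :=
    gradient_eq_of_isLocalMin_add_norm_sub_sq_div (hφ.differentiable two_ne_zero y)
      (isLocalMin_add_of_isLocalMax_supConv_sub hLip hε hŷK hval hmax)
  have hsub : F ŷ (u ŷ) (ε⁻¹ • (ŷ - y)) ≤ 0 := by
    have := hsol.1.2 (fun w => φ (w + (y - ŷ))) (hφ.comp (contDiff_id.add contDiff_const))
      ŷ hŷY (isLocalMax_sub_comp_add_of_isLocalMax_supConv_sub hLip hε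
        (mem_of_superset (hY.mem_nhds hŷY) subset_closure) hval hmax)
    rwa [gradient_comp_add_right, add_sub_cancel, hgrad] at this
  rw [hval, hgrad]
  exact apply_sub_sq_div_le_of_apply_le_zero hF hC hε hsub hŷy

/-- Lemma A.8: if `u` is an `m`-Lipschitz viscosity solution of `F(y, u, Du) = 0` on an open
set `𝒴`, `F` satisfies `|F(y₁,q₁,p) − F(y₂,q₂,p)| ≤ C ‖p‖ (|q₁ − q₂| + ‖y₁ − y₂‖)`, and
`u^ε` is the sup-convolution of `u`, then there is `c̄ < ∞` depending only on `C` and `m`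
such that `F(y, u^ε, Du^ε) ≤ c̄ ε` in the viscosity sense on
`𝒴_ε = {y ∈ 𝒴 : ‖y − w‖ > 2 m ε for all w ∈ ∂𝒴}`. -/
theorem stmt_15 (n : ℕ) (hn : 1 ≤ n) (C m : ℝ) (hC : 0 ≤ C) (hm : 0 ≤ m) :
    ∃ cbar : ℝ,
      ∀ Y : Set (EuclideanSpace ℝ (Fin n)), IsOpen Y → Y.Nonempty →
      ∀ ε : ℝ, 0 < ε →
      ∀ F : EuclideanSpace ℝ (Fin n) → ℝ → EuclideanSpace ℝ (Fin n) → ℝ,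
        (∀ y₁ y₂ q₁ q₂ p, |F y₁ q₁ p - F y₂ q₂ p| ≤ C * ‖p‖ * (|q₁ - q₂| + ‖y₁ - y₂‖)) →
      ∀ u : EuclideanSpace ℝ (Fin n) → ℝ,
        (∀ y₁ ∈ closure Y, ∀ y₂ ∈ closure Y, |u y₁ - u y₂| ≤ m * ‖y₁ - y₂‖) →
        IsViscositySolnOnE n F u Y →
        ∀ φ : EuclideanSpace ℝ (Fin n) → ℝ, ContDiff ℝ 2 φ →
          ∀ y : EuclideanSpace ℝ (Fin n),
            y ∈ Y → (∀ w ∈ frontier Y, 2 * m * ε < ‖y - w‖) →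
            IsLocalMax (fun p =>
              (⨆ w : closure Y,
                (u ↑w - ‖(w : EuclideanSpace ℝ (Fin n)) - p‖ ^ 2 / (2 * ε))) - φ p) y →
            F y (⨆ w : closure Y,
                (u ↑w - ‖(w : EuclideanSpace ℝ (Fin n)) - y‖ ^ 2 / (2 * ε)))
              (gradient φ y) ≤ cbar * ε :=
  stmt_15_general n C m hC hm
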